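/- (Vanishing of Riemann sums under superadditive control.) Let w, η : Δ → [0,∞) be functions such that w is superadditive (w(s,u) + w(u,t) ≤ w(s,t) for all (s,u,t)∈Δ_2) and η(s,t) → 0 as t−s → 0 (i.e. for every ε>0 there is δ>0 with η(s,t) < ε whenever t−s < δ). Let R = (R_{s,t})_{(s,t)∈Δ} be a two-parameter stochastic process with values in a finite-dimensional normed space such that for every (s,t)∈Δ, R_{s,t} is F_t-measurable and satisfies ‖R_{s,t}‖_2 ≤ (w(s,t) η(s,t))^{1/2} and ‖E_s R_{s,t}‖_2 ≤ w(s,t) η(s,t). Then Σ_{[u,v]∈𝒫} R_{u,v} → 0 in L^2 along any sequence of partitions 𝒫 of [0,T] with mesh tending to 0. -/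

import Mathlib

open MeasureTheory Filter Set ENNReal

noncomputable section

variable {Ω : Type*} {mΩ : MeasurableSpace Ω}

/-- conditional expectation commutes with continuous linear maps -/
private lemma condexp_comp_clm (P : Measure Ω) [IsFiniteMeasure P]
    {m : MeasurableSpace Ω} (hm : m ≤ mΩ)
    {E F : Type*} [NormedAddCommGroup E] [NormedSpace ℝ E] [CompleteSpace E]
    [NormedAddCommGroup F] [NormedSpace ℝ F] [CompleteSpace F]
    (φ : E →L[ℝ] F) {f : Ω → E} (hf : Integrable f P) :
    MeasureTheory.condExp m P (fun ω => φ (f ω))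
      =ᵐ[P] fun ω => φ (MeasureTheory.condExp m P f ω) := by
  letI : MeasurableSpace Ω := mΩ
  refine (ae_eq_condExp_of_forall_setIntegral_eq (m₀ := mΩ) (μ := P) hm (φ.integrable_comp hf)
    (fun s _ _ => (φ.integrable_comp integrable_condExp).integrableOn)
    (fun s hs hμs => ?_) ?_).symm
  · rw [φ.integral_comp_comm integrable_condExp.integrableOn,
      setIntegral_condExp (m₀ := mΩ) hm hf hs, φ.integral_comp_comm hf.integrableOn]
  · exact (φ.continuous.comp_stronglyMeasurable stronglyMeasurable_condExp).aestronglyMeasurable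

private lemma eLpNorm_smul_const' {E : Type*} [NormedAddCommGroup E] [NormedSpace ℝ E]
    (P : Measure Ω) (c : Ω → ℝ) (v : E) (p : ℝ≥0∞) :
    eLpNorm (fun ω => c ω • v) p P = (‖v‖₊ : ℝ≥0∞) * eLpNorm c p P := by
  have h1 : eLpNorm (fun ω => c ω • v) p P = eLpNorm ((‖v‖ : ℝ) • c) p P := by
    apply eLpNorm_congr_norm_ae
    filter_upwards with ω
    rw [Pi.smul_apply, norm_smul, norm_smul, Real.norm_eq_abs, Real.norm_eq_abs,
      abs_norm, mul_comm]
  rw [h1, eLpNorm_const_smul]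
  congr 1
  simp
  rfl

private lemma part_mono {π : ℕ → ℕ → ℝ} {N : ℕ → ℕ}
    (hπmono : ∀ k i, i < N k → π k i ≤ π k (i + 1)) (k : ℕ) :
    ∀ i j, i ≤ j → j ≤ N k → π k i ≤ π k j := by
  intro i j hij hjn
  induction j with
  | zero => simp [Nat.le_zero.mp hij]
  | succ j ih =>
    rcases Nat.eq_or_lt_of_le hij with h | h
    · rw [h]
    · exact le_trans (ih (Nat.lt_succ_iff.mp h) (le_trans (Nat.le_succ j) hjn))
        (hπmono k j (Nat.lt_of_lt_of_le (Nat.lt_succ_self j) hjn))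

set_option maxHeartbeats 1000000 in
private lemma aux_scalar
    (P : Measure Ω) [IsProbabilityMeasure P] (ℱ : Filtration ℝ mΩ)
    (T : ℝ) (hT : 0 < T)
    (w η : ℝ → ℝ → ℝ)
    (hw0 : ∀ s t, 0 ≤ s → s ≤ t → t ≤ T → 0 ≤ w s t)
    (hη0 : ∀ s t, 0 ≤ s → s ≤ t → t ≤ T → 0 ≤ η s t)
    (hw : ∀ s u t, 0 ≤ s → s ≤ u → u ≤ t → t ≤ T → w s u + w u t ≤ w s t)
    (hη : ∀ ε : ℝ, 0 < ε → ∃ δ : ℝ, 0 < δ ∧ ∀ s t, 0 ≤ s → s ≤ t → t ≤ T →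
      t - s < δ → η s t < ε)
    (C : ℝ) (hC : 1 ≤ C)
    (R : ℝ → ℝ → Ω → ℝ)
    (hRmeas : ∀ s t, 0 ≤ s → s ≤ t → t ≤ T → StronglyMeasurable[ℱ t] (R s t))
    (hR1 : ∀ s t, 0 ≤ s → s ≤ t → t ≤ T →
      eLpNorm (R s t) 2 P ≤ ENNReal.ofReal (C * (w s t * η s t) ^ (1/2 : ℝ)))
    (hR2 : ∀ s t, 0 ≤ s → s ≤ t → t ≤ T →
      eLpNorm (MeasureTheory.condExp (ℱ s) P (R s t)) 2 P
        ≤ ENNReal.ofReal (C * (w s t * η s t)))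
    (π : ℕ → ℕ → ℝ) (N : ℕ → ℕ)
    (hπ0 : ∀ k, π k 0 = 0) (hπN : ∀ k, π k (N k) = T)
    (hπmono : ∀ k i, i < N k → π k i ≤ π k (i + 1))
    (hmesh : ∀ ε : ℝ, 0 < ε → ∃ K : ℕ, ∀ k, K ≤ k → ∀ i, i < N k →
      π k (i + 1) - π k i < ε) :
    Tendsto
      (fun k => eLpNorm
        (fun ω => ∑ i ∈ Finset.range (N k), R (π k i) (π k (i + 1)) ω) 2 P)
      atTop (nhds 0) := by
  set A := w 0 T with hA
  have hA0 : 0 ≤ A := hw0 0 T le_rfl hT.le le_rfl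
  set B := C * (1 + A) with hB
  have hB1 : 1 ≤ B := by nlinarith
  have hB0 : 0 < B := lt_of_lt_of_le one_pos hB1
  have key : ∀ ε' : ℝ, 0 < ε' → ε' ≤ 1 → ∀ k : ℕ,
      (∀ i, i < N k → η (π k i) (π k (i + 1)) ≤ ε') →
      eLpNorm (fun ω => ∑ i ∈ Finset.range (N k), R (π k i) (π k (i + 1)) ω) 2 P
        ≤ ENNReal.ofReal (3 * B * Real.sqrt ε') := by
    intro ε' hε'0 hε'1 k hk
    have hmono := part_mono hπmono k
    set n := N k with hn
    have ht0 : ∀ i, i ≤ n → 0 ≤ π k i := fun i hi => by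
      have := hmono 0 i (Nat.zero_le _) hi; rwa [hπ0 k] at this
    have htT : ∀ i, i ≤ n → π k i ≤ T := fun i hi => by
      have := hmono i n hi le_rfl; rwa [hπN k] at this
    have hside : ∀ i, i < n → 0 ≤ π k i ∧ π k i ≤ π k (i+1) ∧ π k (i+1) ≤ T :=
      fun i hi => ⟨ht0 i hi.le, hπmono k i hi, htT (i+1) hi⟩
    set wi : ℕ → ℝ := fun i => w (π k i) (π k (i+1)) with hwi
    set ηi : ℕ → ℝ := fun i => η (π k i) (π k (i+1)) with hηi
    have hwi0 : ∀ i, i < n → 0 ≤ wi i := fun i hi =>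
      hw0 _ _ (hside i hi).1 (hside i hi).2.1 (hside i hi).2.2
    have hηi0 : ∀ i, i < n → 0 ≤ ηi i := fun i hi =>
      hη0 _ _ (hside i hi).1 (hside i hi).2.1 (hside i hi).2.2
    have hηiε : ∀ i, i < n → ηi i ≤ ε' := hk
    have tele : ∀ m, m ≤ n → ∑ i ∈ Finset.range m, wi i ≤ w 0 (π k m) := by
      intro m hm
      induction m with
      | zero =>
        rw [Finset.sum_range_zero, hπ0 k]
        exact hw0 0 0 le_rfl le_rfl hT.le
      | succ m ih =>
        rw [Finset.sum_range_succ]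
        have h1 := ih (le_trans (Nat.le_succ m) hm)
        have hmn : m < n := Nat.lt_of_lt_of_le (Nat.lt_succ_self m) hm
        have h2 := hw 0 (π k m) (π k (m+1)) le_rfl (ht0 m hmn.le) (hπmono k m hmn)
          (htT (m+1) hm)
        have h3 : wi m = w (π k m) (π k (m+1)) := rfl
        linarith
    have hsumw : ∑ i ∈ Finset.range n, wi i ≤ A := by
      have := tele n le_rfl; rwa [hπN k] at this
    have hwiA : ∀ i, i < n → wi i ≤ A := by
      intro i hi
      have h1 : wi i ≤ ∑ j ∈ Finset.range n, wi j :=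
        Finset.single_le_sum (fun j hj => hwi0 j (Finset.mem_range.mp hj))
          (Finset.mem_range.mpr hi)
      linarith
    have hsum1 : ∑ i ∈ Finset.range n, wi i * ηi i ≤ ε' * A := by
      calc ∑ i ∈ Finset.range n, wi i * ηi i ≤ ∑ i ∈ Finset.range n, wi i * ε' :=
            Finset.sum_le_sum fun i hi => mul_le_mul_of_nonneg_left
              (hηiε i (Finset.mem_range.mp hi)) (hwi0 i (Finset.mem_range.mp hi))
        _ = ε' * ∑ i ∈ Finset.range n, wi i := by rw [← Finset.sum_mul, mul_comm]
        _ ≤ ε' * A := mul_le_mul_of_nonneg_left hsumw hε'0.le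
    -- the processes
    set Rf : ℕ → Ω → ℝ := fun i => R (π k i) (π k (i+1)) with hRf
    set G : ℕ → Ω → ℝ := fun i => MeasureTheory.condExp (ℱ (π k i)) P (Rf i) with hG
    set M : ℕ → Ω → ℝ := fun i => Rf i - G i with hM
    have hRf_sm : ∀ i, i < n → StronglyMeasurable[ℱ (π k (i+1))] (Rf i) := fun i hi =>
      hRmeas _ _ (hside i hi).1 (hside i hi).2.1 (hside i hi).2.2
    have memR : ∀ i, i < n → MemLp (Rf i) 2 P := fun i hi =>
      ⟨((hRf_sm i hi).mono (ℱ.le _)).aestronglyMeasurable,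
        lt_of_le_of_lt (hR1 _ _ (hside i hi).1 (hside i hi).2.1 (hside i hi).2.2)
          ENNReal.ofReal_lt_top⟩
    have memG : ∀ i, i < n → MemLp (G i) 2 P := fun i hi =>
      ⟨(stronglyMeasurable_condExp.mono (ℱ.le _)).aestronglyMeasurable,
        lt_of_le_of_lt (hR2 _ _ (hside i hi).1 (hside i hi).2.1 (hside i hi).2.2)
          ENNReal.ofReal_lt_top⟩
    have memM : ∀ i, i < n → MemLp (M i) 2 P := fun i hi => (memR i hi).sub (memG i hi)
    have hRne : ∀ i, i < n → eLpNorm (Rf i) 2 P ≠ ⊤ := fun i hi => (memR i hi).2.ne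
    have hGne : ∀ i, i < n → eLpNorm (G i) 2 P ≠ ⊤ := fun i hi => (memG i hi).2.ne
    have hnR : ∀ i, i < n → (eLpNorm (Rf i) 2 P).toReal ≤ C * Real.sqrt (wi i * ηi i) := by
      intro i hi
      have h := hR1 _ _ (hside i hi).1 (hside i hi).2.1 (hside i hi).2.2
      have h2 : (eLpNorm (Rf i) 2 P).toReal
          ≤ (ENNReal.ofReal (C * (wi i * ηi i) ^ (1/2:ℝ))).toReal :=
        ENNReal.toReal_mono ENNReal.ofReal_ne_top h
      rwa [ENNReal.toReal_ofReal (mul_nonneg (by linarith)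
        (Real.rpow_nonneg (mul_nonneg (hwi0 i hi) (hηi0 i hi)) _)),
        ← Real.sqrt_eq_rpow] at h2
    have hnG : ∀ i, i < n → (eLpNorm (G i) 2 P).toReal ≤ C * (wi i * ηi i) := by
      intro i hi
      have h := hR2 _ _ (hside i hi).1 (hside i hi).2.1 (hside i hi).2.2
      have h2 := ENNReal.toReal_mono ENNReal.ofReal_ne_top h
      rwa [ENNReal.toReal_ofReal (mul_nonneg (by linarith)
        (mul_nonneg (hwi0 i hi) (hηi0 i hi)))] at h2
    -- Lp elements
    set f : ℕ → Lp ℝ 2 P := fun i =>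
      if hi : i < n then ((memM i hi).toLp (M i)) else 0 with hfdef
    have hf_coe : ∀ i, i < n → (f i : Ω → ℝ) =ᵐ[P] M i := by
      intro i hi
      simp only [hfdef, dif_pos hi]
      exact MemLp.coeFn_toLp _
    have hf_norm : ∀ i, i < n → ‖f i‖ ≤ C * Real.sqrt (wi i * ηi i) + C * (wi i * ηi i) := by
      intro i hi
      simp only [hfdef, dif_pos hi]
      rw [Lp.norm_toLp]
      have hsub : eLpNorm (M i) 2 P ≤ eLpNorm (Rf i) 2 P + eLpNorm (G i) 2 P := by
        simp only [hM]
        exact eLpNorm_sub_le (memR i hi).1 (memG i hi).1 one_le_two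
      calc (eLpNorm (M i) 2 P).toReal
          ≤ (eLpNorm (Rf i) 2 P + eLpNorm (G i) 2 P).toReal :=
            ENNReal.toReal_mono (ENNReal.add_ne_top.mpr ⟨hRne i hi, hGne i hi⟩) hsub
        _ = (eLpNorm (Rf i) 2 P).toReal + (eLpNorm (G i) 2 P).toReal :=
            ENNReal.toReal_add (hRne i hi) (hGne i hi)
        _ ≤ C * Real.sqrt (wi i * ηi i) + C * (wi i * ηi i) :=
            add_le_add (hnR i hi) (hnG i hi)
    -- orthogonality
    have orth : ∀ i j, i < j → j < n → ∫ ω, M i ω * M j ω ∂P = 0 := by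
      intro i j hij hj
      have hi : i < n := hij.trans hj
      have hm : ℱ (π k j) ≤ mΩ := ℱ.le _
      have hMi_sm : StronglyMeasurable[ℱ (π k j)] (M i) := by
        simp only [hM]
        exact ((hRf_sm i hi).mono (ℱ.mono (hmono (i+1) j hij hj.le))).sub
          (stronglyMeasurable_condExp.mono (ℱ.mono (hmono i j hij.le hj.le)))
      have hint_j : Integrable (M j) P := (memM j hj).integrable one_le_two
      have hprod : Integrable (M i * M j) P := by
        have h3 := L2.integrable_inner (𝕜 := ℝ) (f i) (f j)
        have h2 : Integrable (fun ω => (f i : Ω → ℝ) ω * (f j : Ω → ℝ) ω) P := by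
          simpa [RCLike.inner_apply, mul_comm] using h3
        refine h2.congr ?_
        filter_upwards [hf_coe i hi, hf_coe j hj] with ω h1 h2'
        simp only [Pi.mul_apply, h1, h2']
      have hGj0 : MeasureTheory.condExp (ℱ (π k j)) P (M j) =ᵐ[P] 0 := by
        have h1 : Integrable (Rf j) P := (memR j hj).integrable one_le_two
        have h2 : Integrable (G j) P := by
          simp only [hG]; exact integrable_condExp
        have h4 : MeasureTheory.condExp (ℱ (π k j)) P (G j) = G j := by
          simp only [hG]
          exact condExp_of_stronglyMeasurable (ℱ.le _) stronglyMeasurable_condExp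
            integrable_condExp
        calc MeasureTheory.condExp (ℱ (π k j)) P (M j)
            =ᵐ[P] MeasureTheory.condExp (ℱ (π k j)) P (Rf j)
                - MeasureTheory.condExp (ℱ (π k j)) P (G j) := by
              simp only [hM]; exact condExp_sub h1 h2 _
          _ = 0 := by rw [h4]; simp only [hG]; exact sub_self _
      have hz : MeasureTheory.condExp (ℱ (π k j)) P (M i * M j) =ᵐ[P] 0 := by
        refine (condExp_mul_of_stronglyMeasurable_left hMi_sm hprod hint_j).trans ?_
        filter_upwards [hGj0] with ω hω
        simp only [Pi.mul_apply, hω, Pi.zero_apply, mul_zero]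
      have hI : ∫ ω, M i ω * M j ω ∂P
          = ∫ ω, (MeasureTheory.condExp (ℱ (π k j)) P (M i * M j)) ω ∂P :=
        (integral_condExp hm).symm
      rw [hI, integral_congr_ae hz]
      simp
    have orthf : ∀ i ∈ Finset.range n, ∀ j ∈ Finset.range n, i ≠ j →
        inner (𝕜 := ℝ) (f i) (f j) = (0:ℝ) := by
      have key2 : ∀ a b, a < b → b < n → inner (𝕜 := ℝ) (f a) (f b) = (0:ℝ) := by
        intro a b hab hb
        rw [L2.inner_def]
        have hae : ∀ᵐ ω ∂P, inner (𝕜 := ℝ) ((f a : Ω → ℝ) ω) ((f b : Ω → ℝ) ω)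
            = M a ω * M b ω := by
          filter_upwards [hf_coe a (hab.trans hb), hf_coe b hb] with ω h1 h2
          simp [RCLike.inner_apply, h1, h2, mul_comm]
        rw [integral_congr_ae hae, orth a b hab hb]
      intro i hi j hj hne
      rw [Finset.mem_range] at hi hj
      rcases hne.lt_or_gt with h | h
      · exact key2 i j h hj
      · rw [real_inner_comm]; exact key2 j i h hi
    set S : Lp ℝ 2 P := ∑ i ∈ Finset.range n, f i with hSdef
    have hS_coe : (S : Ω → ℝ) =ᵐ[P] fun ω => ∑ i ∈ Finset.range n, M i ω := by
      have hgen : ∀ s : Finset ℕ, s ⊆ Finset.range n →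
          ((∑ i ∈ s, f i : Lp ℝ 2 P) : Ω → ℝ) =ᵐ[P] fun ω => ∑ i ∈ s, M i ω := by
        intro s
        induction s using Finset.induction_on with
        | empty =>
          intro _
          simp only [Finset.sum_empty]
          exact Lp.coeFn_zero ℝ 2 P
        | @insert a s ha ih =>
          intro hsub
          have hsub' : s ⊆ Finset.range n := fun x hx => hsub (Finset.mem_insert_of_mem hx)
          have han : a < n := Finset.mem_range.mp (hsub (Finset.mem_insert_self a s))
          rw [Finset.sum_insert ha]
          refine (Lp.coeFn_add _ _).trans ?_
          filter_upwards [hf_coe a han, ih hsub'] with ω h1 h2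
          simp only [Pi.add_apply, h1, h2, Finset.sum_insert ha]
      exact hgen _ le_rfl
    have hS_norm_sq : ‖S‖^2 = ∑ i ∈ Finset.range n, ‖f i‖^2 := by
      have hinner : inner (𝕜 := ℝ) S S = ∑ i ∈ Finset.range n, inner (𝕜 := ℝ) (f i) (f i) := by
        rw [hSdef, sum_inner]
        refine Finset.sum_congr rfl fun i hi => ?_
        rw [inner_sum]
        exact Finset.sum_eq_single_of_mem i hi fun j hj hne => orthf i hi j hj hne.symm
      rw [← real_inner_self_eq_norm_sq, hinner]
      exact Finset.sum_congr rfl fun i _ => real_inner_self_eq_norm_sq _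
    have hS_norm : ‖S‖ ≤ 2 * B * Real.sqrt ε' := by
      have h1 : ‖S‖^2 ≤ 2 * ε' * B^2 := by
        have hterm : ∀ i, i < n → ‖f i‖^2 ≤ 2*C^2*(wi i * ηi i) + 2*C^2*(wi i * ηi i)^2 := by
          intro i hi
          have h0 : 0 ≤ wi i * ηi i := mul_nonneg (hwi0 i hi) (hηi0 i hi)
          have hs := Real.sq_sqrt h0
          have hn := hf_norm i hi
          have hsn := Real.sqrt_nonneg (wi i * ηi i)
          have hfn := norm_nonneg (f i)
          have hx := pow_le_pow_left₀ hfn hn 2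
          nlinarith [hx, hs, sq_nonneg (C * Real.sqrt (wi i * ηi i) - C * (wi i * ηi i))]
        have h2 : ∑ i ∈ Finset.range n, ‖f i‖^2
            ≤ ∑ i ∈ Finset.range n, (2*C^2*(wi i * ηi i) + 2*C^2*(wi i * ηi i)^2) :=
          Finset.sum_le_sum fun i hi => hterm i (Finset.mem_range.mp hi)
        have h3 : ∑ i ∈ Finset.range n, (wi i * ηi i)^2
            ≤ (ε' * A) * ∑ i ∈ Finset.range n, (wi i * ηi i) := by
          rw [Finset.mul_sum]
          refine Finset.sum_le_sum fun i hi => ?_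
          have hi' := Finset.mem_range.mp hi
          have h4 : wi i * ηi i ≤ ε' * A := by
            have := mul_le_mul (hwiA i hi') (hηiε i hi') (hηi0 i hi') hA0
            linarith [this]
          have h5 : 0 ≤ wi i * ηi i := mul_nonneg (hwi0 i hi') (hηi0 i hi')
          nlinarith
        have h6 : ∑ i ∈ Finset.range n, (wi i * ηi i) ≤ ε' * A := hsum1
        rw [hS_norm_sq]
        have h8 : ∑ i ∈ Finset.range n, (2*C^2*(wi i * ηi i) + 2*C^2*(wi i * ηi i)^2)
            = 2*C^2 * (∑ i ∈ Finset.range n, (wi i * ηi i))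
              + 2*C^2 * (∑ i ∈ Finset.range n, (wi i * ηi i)^2) := by
          rw [Finset.sum_add_distrib, Finset.mul_sum, Finset.mul_sum]
        have hC0 : (0:ℝ) < C := lt_of_lt_of_le one_pos hC
        have hεA : 0 ≤ ε' * A := mul_nonneg hε'0.le hA0
        -- combine
        have h9 : ∑ i ∈ Finset.range n, (wi i * ηi i)^2 ≤ (ε' * A) * (ε' * A) :=
          le_trans h3 (mul_le_mul_of_nonneg_left h6 hεA)
        have h10 : (ε' * A) * (ε' * A) ≤ (ε' * A) * A :=
          mul_le_mul_of_nonneg_left (by nlinarith) hεA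
        have hfinal : 2*C^2*(ε'*A) + 2*C^2*((ε'*A)*A) ≤ 2 * ε' * B^2 := by
          rw [hB]
          nlinarith [mul_nonneg (mul_nonneg hε'0.le (sq_nonneg C)) (by linarith : (0:ℝ) ≤ 1 + A),
            mul_nonneg (mul_nonneg hε'0.le (sq_nonneg C)) hA0]
        calc ∑ i ∈ Finset.range n, ‖f i‖^2
            ≤ ∑ i ∈ Finset.range n, (2*C^2*(wi i * ηi i) + 2*C^2*(wi i * ηi i)^2) := h2
          _ = 2*C^2 * (∑ i ∈ Finset.range n, (wi i * ηi i))
              + 2*C^2 * (∑ i ∈ Finset.range n, (wi i * ηi i)^2) := h8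
          _ ≤ 2*C^2*(ε'*A) + 2*C^2*((ε'*A)*A) :=
              add_le_add (mul_le_mul_of_nonneg_left h6 (by positivity))
                (mul_le_mul_of_nonneg_left (le_trans h3
                  (le_trans (mul_le_mul_of_nonneg_left h6 hεA) h10)) (by positivity))
          _ ≤ 2 * ε' * B^2 := hfinal
      have h2 : ‖S‖^2 ≤ (2 * B * Real.sqrt ε')^2 := by
        have := Real.sq_sqrt hε'0.le
        nlinarith [Real.sqrt_nonneg ε']
      calc ‖S‖ = Real.sqrt (‖S‖^2) := (Real.sqrt_sq (norm_nonneg S)).symm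
        _ ≤ Real.sqrt ((2 * B * Real.sqrt ε')^2) := Real.sqrt_le_sqrt h2
        _ = 2 * B * Real.sqrt ε' := Real.sqrt_sq (by positivity)
    -- the G part
    have hGsum : eLpNorm (fun ω => ∑ i ∈ Finset.range n, G i ω) 2 P
        ≤ ENNReal.ofReal (C * (ε' * A)) := by
      have h1 : eLpNorm (fun ω => ∑ i ∈ Finset.range n, G i ω) 2 P
          ≤ ∑ i ∈ Finset.range n, eLpNorm (G i) 2 P := by
        have hsl := eLpNorm_sum_le (μ := P) (f := fun i => G i) (s := Finset.range n)
          (fun i _ => (stronglyMeasurable_condExp.mono (ℱ.le _)).aestronglyMeasurable)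
          one_le_two
        have heq : (fun ω => ∑ i ∈ Finset.range n, G i ω)
            = (∑ i ∈ Finset.range n, fun ω => G i ω) := by
          funext ω; simp [Finset.sum_apply]
        rw [heq]
        exact hsl
      have h2 : ∑ i ∈ Finset.range n, eLpNorm (G i) 2 P
          ≤ ∑ i ∈ Finset.range n, ENNReal.ofReal (C * (wi i * ηi i)) :=
        Finset.sum_le_sum fun i hi =>
          hR2 _ _ (hside i (Finset.mem_range.mp hi)).1 (hside i (Finset.mem_range.mp hi)).2.1
            (hside i (Finset.mem_range.mp hi)).2.2
      have h3 : ∑ i ∈ Finset.range n, ENNReal.ofReal (C * (wi i * ηi i))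
          = ENNReal.ofReal (∑ i ∈ Finset.range n, C * (wi i * ηi i)) := by
        rw [ENNReal.ofReal_sum_of_nonneg]
        intro i hi
        exact mul_nonneg (by linarith)
          (mul_nonneg (hwi0 i (Finset.mem_range.mp hi)) (hηi0 i (Finset.mem_range.mp hi)))
      have h4 : ∑ i ∈ Finset.range n, C * (wi i * ηi i) ≤ C * (ε' * A) := by
        rw [← Finset.mul_sum]
        exact mul_le_mul_of_nonneg_left hsum1 (by linarith)
      exact le_trans h1 (le_trans h2 (le_of_eq h3 |>.trans (ENNReal.ofReal_le_ofReal h4)))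
    -- the M part
    have hMsum_elp : eLpNorm (fun ω => ∑ i ∈ Finset.range n, M i ω) 2 P
        = ENNReal.ofReal ‖S‖ := by
      rw [← eLpNorm_congr_ae hS_coe, Lp.norm_def, ENNReal.ofReal_toReal (Lp.eLpNorm_ne_top S)]
    have hMsum_aesm : AEStronglyMeasurable (fun ω => ∑ i ∈ Finset.range n, M i ω) P :=
      (Lp.aestronglyMeasurable S).congr hS_coe
    have hGsum_aesm : AEStronglyMeasurable (fun ω => ∑ i ∈ Finset.range n, G i ω) P := by
      apply Finset.aestronglyMeasurable_fun_sum
      exact fun i _ => (stronglyMeasurable_condExp.mono (ℱ.le _)).aestronglyMeasurable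
    have hdecomp : (fun ω => ∑ i ∈ Finset.range n, Rf i ω)
        = (fun ω => ∑ i ∈ Finset.range n, M i ω) + (fun ω => ∑ i ∈ Finset.range n, G i ω) := by
      funext ω
      simp only [hM, Pi.add_apply, Pi.sub_apply, Finset.sum_sub_distrib]
      ring
    calc eLpNorm (fun ω => ∑ i ∈ Finset.range n, Rf i ω) 2 P
        = eLpNorm ((fun ω => ∑ i ∈ Finset.range n, M i ω)
            + (fun ω => ∑ i ∈ Finset.range n, G i ω)) 2 P := by rw [hdecomp]
      _ ≤ eLpNorm (fun ω => ∑ i ∈ Finset.range n, M i ω) 2 P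
            + eLpNorm (fun ω => ∑ i ∈ Finset.range n, G i ω) 2 P :=
          eLpNorm_add_le hMsum_aesm hGsum_aesm one_le_two
      _ ≤ ENNReal.ofReal (2 * B * Real.sqrt ε') + ENNReal.ofReal (C * (ε' * A)) := by
          refine add_le_add ?_ hGsum
          rw [hMsum_elp]
          exact ENNReal.ofReal_le_ofReal hS_norm
      _ = ENNReal.ofReal (2 * B * Real.sqrt ε' + C * (ε' * A)) :=
          (ENNReal.ofReal_add (by positivity) (by positivity)).symm
      _ ≤ ENNReal.ofReal (3 * B * Real.sqrt ε') := by
          apply ENNReal.ofReal_le_ofReal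
          have hsq : Real.sqrt ε' ≤ 1 := by
            rw [show (1:ℝ) = Real.sqrt 1 by rw [Real.sqrt_one]]
            exact Real.sqrt_le_sqrt hε'1
          have hsq2 : ε' ≤ Real.sqrt ε' := by
            nlinarith [Real.sq_sqrt hε'0.le, Real.sqrt_nonneg ε']
          have hC0 : (0:ℝ) < C := lt_of_lt_of_le one_pos hC
          have h1 : C * (ε' * A) ≤ B * Real.sqrt ε' := by
            have : C * (ε' * A) ≤ C * (Real.sqrt ε' * A) := by
              apply mul_le_mul_of_nonneg_left _ hC0.le
              exact mul_le_mul_of_nonneg_right hsq2 hA0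
            calc C * (ε' * A) ≤ C * (Real.sqrt ε' * A) := this
              _ = C * A * Real.sqrt ε' := by ring
              _ ≤ C * (1 + A) * Real.sqrt ε' := by
                  apply mul_le_mul_of_nonneg_right _ (Real.sqrt_nonneg ε')
                  nlinarith
              _ = B * Real.sqrt ε' := by rw [hB]
          linarith
  rw [ENNReal.tendsto_nhds_zero]
  intro ε hε
  obtain ⟨c, hc0, hcε⟩ : ∃ c : ℝ, 0 < c ∧ ENNReal.ofReal c ≤ ε := by
    rcases eq_or_ne ε ⊤ with h | h
    · exact ⟨1, one_pos, by simp [h]⟩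
    · exact ⟨ε.toReal, ENNReal.toReal_pos hε.ne' h, by rw [ENNReal.ofReal_toReal h]⟩
  set ε' : ℝ := min 1 ((c / (3 * B)) ^ 2) with hε'
  have hε'0 : 0 < ε' := lt_min one_pos (by positivity)
  have hε'1 : ε' ≤ 1 := min_le_left _ _
  have hsqrt : Real.sqrt ε' ≤ c / (3 * B) := by
    calc Real.sqrt ε' ≤ Real.sqrt ((c / (3 * B)) ^ 2) :=
          Real.sqrt_le_sqrt (min_le_right _ _)
      _ = c / (3 * B) := Real.sqrt_sq (by positivity)
  have h3B : 3 * B * Real.sqrt ε' ≤ c := by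
    rw [mul_comm (3 * B)]
    rw [← le_div_iff₀ (by positivity)]
    exact hsqrt
  obtain ⟨δ, hδ0, hδ⟩ := hη ε' hε'0
  obtain ⟨K, hK⟩ := hmesh δ hδ0
  rw [eventually_atTop]
  refine ⟨K, fun k hk => ?_⟩
  have hmono := part_mono hπmono k
  have hηk : ∀ i, i < N k → η (π k i) (π k (i + 1)) ≤ ε' := by
    intro i hi
    have h0 : 0 ≤ π k i := by
      have := hmono 0 i (Nat.zero_le _) hi.le; rwa [hπ0 k] at this
    have hle : π k i ≤ π k (i + 1) := hπmono k i hi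
    have hTi : π k (i + 1) ≤ T := by
      have := hmono (i + 1) (N k) hi le_rfl; rwa [hπN k] at this
    exact (hδ _ _ h0 hle hTi (hK k hk i hi)).le
  exact le_trans (key ε' hε'0 hε'1 k hηk) (le_trans (ENNReal.ofReal_le_ofReal h3B) hcε)

set_option maxHeartbeats 1000000 in
/-- **Vanishing of Riemann sums under superadditive control.**
If `R_{s,t}` is `F_t`-measurable with `‖R_{s,t}‖_2 ≤ (w(s,t)η(s,t))^{1/2}` and
`‖E_s R_{s,t}‖_2 ≤ w(s,t)η(s,t)`, where `w` is superadditive and `η(s,t) → 0` as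
`t - s → 0`, then the Riemann sums `Σ_{[u,v]∈𝒫} R_{u,v}` tend to `0` in `L^2`
along any sequence of partitions of `[0,T]` with vanishing mesh. -/
theorem riemann_sums_vanish_of_superadditive_control
    {W : Type*} [NormedAddCommGroup W] [NormedSpace ℝ W] [FiniteDimensional ℝ W]
    (P : Measure Ω) [IsProbabilityMeasure P] (ℱ : Filtration ℝ mΩ)
    (T : ℝ) (hT : 0 < T)
    (w η : ℝ → ℝ → ℝ)
    (hw0 : ∀ s t, 0 ≤ s → s ≤ t → t ≤ T → 0 ≤ w s t)
    (hη0 : ∀ s t, 0 ≤ s → s ≤ t → t ≤ T → 0 ≤ η s t)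
    -- `w` is superadditive
    (hw : ∀ s u t, 0 ≤ s → s ≤ u → u ≤ t → t ≤ T → w s u + w u t ≤ w s t)
    -- `η(s,t) → 0` as `t - s → 0`
    (hη : ∀ ε : ℝ, 0 < ε → ∃ δ : ℝ, 0 < δ ∧ ∀ s t, 0 ≤ s → s ≤ t → t ≤ T →
      t - s < δ → η s t < ε)
    (R : ℝ → ℝ → Ω → W)
    (hRmeas : ∀ s t, 0 ≤ s → s ≤ t → t ≤ T → StronglyMeasurable[ℱ t] (R s t))
    -- `‖R_{s,t}‖_2 ≤ (w(s,t) η(s,t))^{1/2}`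
    (hR1 : ∀ s t, 0 ≤ s → s ≤ t → t ≤ T →
      eLpNorm (R s t) 2 P ≤ ENNReal.ofReal ((w s t * η s t) ^ (1/2 : ℝ)))
    -- `‖E_s R_{s,t}‖_2 ≤ w(s,t) η(s,t)`
    (hR2 : ∀ s t, 0 ≤ s → s ≤ t → t ≤ T →
      eLpNorm (MeasureTheory.condExp (ℱ s) P (R s t)) 2 P
        ≤ ENNReal.ofReal (w s t * η s t))
    -- a sequence of partitions of `[0,T]` with vanishing mesh
    (π : ℕ → ℕ → ℝ) (N : ℕ → ℕ)
    (hπ0 : ∀ k, π k 0 = 0) (hπN : ∀ k, π k (N k) = T)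
    (hπmono : ∀ k i, i < N k → π k i ≤ π k (i + 1))
    (hmesh : ∀ ε : ℝ, 0 < ε → ∃ K : ℕ, ∀ k, K ≤ k → ∀ i, i < N k →
      π k (i + 1) - π k i < ε) :
    Tendsto
      (fun k => eLpNorm
        (fun ω => ∑ i ∈ Finset.range (N k), R (π k i) (π k (i + 1)) ω) 2 P)
      atTop (nhds 0) := by

  classical
  set b := Module.finBasis ℝ W with hb
  set φ : Fin (Module.finrank ℝ W) → W →L[ℝ] ℝ :=
    fun j => LinearMap.toContinuousLinearMap (b.coord j) with hφ
  -- membership facts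
  have memR : ∀ s t, 0 ≤ s → s ≤ t → t ≤ T → MemLp (R s t) 2 P := fun s t hs hst htT =>
    ⟨((hRmeas s t hs hst htT).mono (ℱ.le _)).aestronglyMeasurable,
      lt_of_le_of_lt (hR1 s t hs hst htT) ENNReal.ofReal_lt_top⟩
  -- coordinate processes converge
  have hcomp : ∀ j, Tendsto (fun k => eLpNorm
      (fun ω => φ j (∑ i ∈ Finset.range (N k), R (π k i) (π k (i + 1)) ω)) 2 P)
      atTop (nhds 0) := by
    intro j
    set Cj : ℝ := max 1 ‖φ j‖ with hCj
    have hCj1 : 1 ≤ Cj := le_max_left _ _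
    have hCj0 : 0 ≤ Cj := le_trans zero_le_one hCj1
    have hφle : ‖φ j‖ ≤ Cj := le_max_right _ _
    have hbound : ∀ (g : Ω → W), eLpNorm (fun ω => φ j (g ω)) 2 P
        ≤ ENNReal.ofReal ‖φ j‖ * eLpNorm g 2 P := by
      intro g
      have h1 : eLpNorm (fun ω => φ j (g ω)) 2 P ≤ eLpNorm ((‖φ j‖ : ℝ) • g) 2 P := by
        apply eLpNorm_mono
        intro ω
        rw [Pi.smul_apply, norm_smul, norm_norm]
        exact (φ j).le_opNorm _
      rw [eLpNorm_const_smul] at h1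
      refine h1.trans (le_of_eq ?_)
      congr 1
      rw [← ofReal_norm, norm_norm]
    have haux := aux_scalar P ℱ T hT w η hw0 hη0 hw hη Cj hCj1
      (fun s t ω => φ j (R s t ω))
      (fun s t hs hst htT => (φ j).continuous.comp_stronglyMeasurable (hRmeas s t hs hst htT))
      (fun s t hs hst htT => by
        refine (hbound (R s t)).trans ?_
        calc ENNReal.ofReal ‖φ j‖ * eLpNorm (R s t) 2 P
            ≤ ENNReal.ofReal Cj * ENNReal.ofReal ((w s t * η s t) ^ (1/2 : ℝ)) :=
              mul_le_mul (ENNReal.ofReal_le_ofReal hφle) (hR1 s t hs hst htT)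
                zero_le zero_le
          _ = ENNReal.ofReal (Cj * (w s t * η s t) ^ (1/2 : ℝ)) :=
              (ENNReal.ofReal_mul hCj0).symm)
      (fun s t hs hst htT => by
        have hce := condexp_comp_clm P (ℱ.le s) (φ j)
          ((memR s t hs hst htT).integrable one_le_two)
        rw [eLpNorm_congr_ae hce]
        refine (hbound (MeasureTheory.condExp (ℱ s) P (R s t))).trans ?_
        calc ENNReal.ofReal ‖φ j‖ * eLpNorm (MeasureTheory.condExp (ℱ s) P (R s t)) 2 P
            ≤ ENNReal.ofReal Cj * ENNReal.ofReal (w s t * η s t) :=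
              mul_le_mul (ENNReal.ofReal_le_ofReal hφle) (hR2 s t hs hst htT)
                zero_le zero_le
          _ = ENNReal.ofReal (Cj * (w s t * η s t)) := (ENNReal.ofReal_mul hCj0).symm)
      π N hπ0 hπN hπmono hmesh
    have heq : (fun k => eLpNorm
        (fun ω => φ j (∑ i ∈ Finset.range (N k), R (π k i) (π k (i + 1)) ω)) 2 P)
        = (fun k => eLpNorm
        (fun ω => ∑ i ∈ Finset.range (N k), φ j (R (π k i) (π k (i + 1)) ω)) 2 P) := by
      funext k
      congr 1
      funext ω
      rw [map_sum]
    rw [heq]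
    exact haux
  -- combine the coordinates
  have hbound2 : ∀ k, eLpNorm
      (fun ω => ∑ i ∈ Finset.range (N k), R (π k i) (π k (i + 1)) ω) 2 P
      ≤ ∑ j, (‖b j‖₊ : ℝ≥0∞) * eLpNorm
        (fun ω => φ j (∑ i ∈ Finset.range (N k), R (π k i) (π k (i + 1)) ω)) 2 P := by
    intro k
    set F : Ω → W := fun ω => ∑ i ∈ Finset.range (N k), R (π k i) (π k (i + 1)) ω with hF
    have hF_aesm : AEStronglyMeasurable F P := by
      apply Finset.aestronglyMeasurable_fun_sum
      intro i hi
      have hi' := Finset.mem_range.mp hi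
      have hmono := part_mono hπmono k
      have h0 : 0 ≤ π k i := by
        have := hmono 0 i (Nat.zero_le _) hi'.le; rwa [hπ0 k] at this
      have hle : π k i ≤ π k (i + 1) := hπmono k i hi'
      have hTi : π k (i + 1) ≤ T := by
        have := hmono (i + 1) (N k) hi' le_rfl; rwa [hπN k] at this
      exact ((hRmeas _ _ h0 hle hTi).mono (ℱ.le _)).aestronglyMeasurable
    have hrepr : F = fun ω => ∑ j, (φ j (F ω)) • b j := by
      funext ω
      conv_lhs => rw [← b.sum_repr (F ω)]
      refine Finset.sum_congr rfl fun j _ => ?_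
      congr 1
    calc eLpNorm F 2 P = eLpNorm (fun ω => ∑ j, (φ j (F ω)) • b j) 2 P := by rw [← hrepr]
      _ ≤ ∑ j, eLpNorm (fun ω => (φ j (F ω)) • b j) 2 P := by
          have hsl := eLpNorm_sum_le (μ := P)
            (f := fun j ω => (φ j (F ω)) • b j) (s := Finset.univ)
            (fun j _ => (((φ j).continuous.comp_aestronglyMeasurable hF_aesm).smul
              aestronglyMeasurable_const))
            one_le_two
          have heq : (fun ω => ∑ j, (φ j (F ω)) • b j)
              = (∑ j, fun ω => (φ j (F ω)) • b j) := by
            funext ω; simp [Finset.sum_apply]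
          rw [heq]
          exact hsl
      _ = ∑ j, (‖b j‖₊ : ℝ≥0∞) * eLpNorm (fun ω => φ j (F ω)) 2 P := by
          refine Finset.sum_congr rfl fun j _ => ?_
          exact eLpNorm_smul_const' P (fun ω => φ j (F ω)) (b j) 2
  have hsum_tend : Tendsto (fun k => ∑ j, (‖b j‖₊ : ℝ≥0∞) * eLpNorm
      (fun ω => φ j (∑ i ∈ Finset.range (N k), R (π k i) (π k (i + 1)) ω)) 2 P)
      atTop (nhds 0) := by
    have h : Tendsto (fun k => ∑ j, (‖b j‖₊ : ℝ≥0∞) * eLpNorm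
        (fun ω => φ j (∑ i ∈ Finset.range (N k), R (π k i) (π k (i + 1)) ω)) 2 P)
        atTop (nhds (∑ j : Fin (Module.finrank ℝ W), (‖b j‖₊ : ℝ≥0∞) * 0)) :=
      tendsto_finset_sum _
        (fun j _ => ENNReal.Tendsto.const_mul (hcomp j) (Or.inr ENNReal.coe_ne_top))
    simpa using h
  exact tendsto_of_tendsto_of_tendsto_of_le_of_le tendsto_const_nhds hsum_tend
    (fun k => zero_le) hbound2
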